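/- arXiv:2208.12868 — 9 statements merged into one kernel-verified Lean document; each statement's English description precedes it below -/
import Mathlib

section
/- Let (T, {X_t}) be a rooted tree decomposition of G, let t be a node of T, and let S ⊆ V(G) induce a connected subgraph of G. Then S ∩ V(G[t]) is a good subset of G[t], i.e., either G[S ∩ V(G[t])] is connected or every connected component of G[S ∩ V(G[t])] has non-empty intersection with X_t. -/
/-- `(T, X)` is a tree decomposition of the graph `G`. -/
def IsTreeDecomp {V ι : Type*} (G : SimpleGraph V) (T : SimpleGraph ι)
    (X : ι → Set V) : Prop :=
  T.IsTree ∧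
  (∀ v : V, ∃ t : ι, v ∈ X t) ∧
  (∀ u v : V, G.Adj u v → ∃ t : ι, u ∈ X t ∧ v ∈ X t) ∧
  (∀ v : V, ∀ t₁ t₂ : ι, v ∈ X t₁ → v ∈ X t₂ →
    ∀ p : T.Walk t₁ t₂, p.IsPath → ∀ t ∈ p.support, v ∈ X t)

/-- Descendants of `t` in `T` rooted at `r`. -/
def descNodes {ι : Type*} (T : SimpleGraph ι) (r t : ι) : Set ι :=
  {s | ∀ p : T.Walk s r, t ∈ p.support}

/-- The vertex set of `G[t]`. -/
def descVerts {V ι : Type*} (T : SimpleGraph ι) (X : ι → Set V) (r t : ι) : Set V :=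
  ⋃ s ∈ descNodes T r t, X s

/-- `a` and `b` lie in `S` and are connected by a path within the induced subgraph `G[S]`. -/
def ReachIn {V : Type*} (G : SimpleGraph V) (S : Set V) (a b : V) : Prop :=
  ∃ (ha : a ∈ S) (hb : b ∈ S), (G.induce S).Reachable ⟨a, ha⟩ ⟨b, hb⟩

/-- `S` is a *good* subset with respect to the bag `X`: `G[S]` is connected, or every
connected component of `G[S]` has non-empty intersection with `X`. -/
def Good {V : Type*} (G : SimpleGraph V) (S X : Set V) : Prop :=
  (G.induce S).Connected ∨ ∀ a ∈ S, ∃ b ∈ X, ReachIn G S a b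


lemma separator_lem {V ι : Type*} (G : SimpleGraph V) (T : SimpleGraph ι)
    (X : ι → Set V) (hTD : IsTreeDecomp G T X) (r t : ι) {u v : V}
    (hu : u ∈ descVerts T X r t) (hv : v ∉ descVerts T X r t) (hadj : G.Adj u v) :
    u ∈ X t := by
  classical
  obtain ⟨hTree, -, hedge, hcond⟩ := hTD
  rw [descVerts, Set.mem_iUnion₂] at hu
  obtain ⟨s₁, hs₁d, hus₁⟩ := hu
  obtain ⟨s₃, hus₃, hvs₃⟩ := hedge u v hadj
  have hs₃ : s₃ ∉ descNodes T r t := by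
    intro h
    exact hv (Set.mem_iUnion₂.mpr ⟨s₃, h, hvs₃⟩)
  have hex : ∃ p : T.Walk s₃ r, t ∉ p.support := by
    by_contra h
    push_neg at h
    exact hs₃ h
  obtain ⟨p, hp⟩ := hex
  obtain ⟨w⟩ := hTree.isConnected.preconnected s₁ s₃
  have hq : t ∈ (w.toPath : T.Walk s₁ s₃).support ∨ t ∈ p.support := by
    rw [← SimpleGraph.Walk.mem_support_append_iff]
    exact hs₁d ((w.toPath : T.Walk s₁ s₃).append p)
  have ht : t ∈ (w.toPath : T.Walk s₁ s₃).support := hq.resolve_right hp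
  exact hcond u s₁ s₃ hus₁ hus₃ w.toPath w.toPath.2 t ht

lemma walk_reach_lem {V ι : Type*} (G : SimpleGraph V) (T : SimpleGraph ι)
    (X : ι → Set V) (hTD : IsTreeDecomp G T X) (r t : ι) {S : Set V}
    {x y : S} (w : (G.induce S).Walk x y) :
    (x : V) ∈ descVerts T X r t → (y : V) ∉ descVerts T X r t →
    ∃ b ∈ X t, ReachIn G (S ∩ descVerts T X r t) (x : V) b := by
  induction w with
  | nil => intro h1 h2; exact absurd h1 h2
  | @cons a z c h w ih =>
    intro hx hy
    by_cases hz : (z : V) ∈ descVerts T X r t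
    · obtain ⟨b, hb, hz', hb', hr⟩ := ih hz hy
      refine ⟨b, hb, ⟨a.2, hx⟩, hb', ?_⟩
      have hadj : (G.induce (S ∩ descVerts T X r t)).Adj ⟨(a:V), ⟨a.2, hx⟩⟩ ⟨(z:V), hz'⟩ := h
      exact hadj.reachable.trans hr
    · have hmem : (a : V) ∈ X t := separator_lem G T X hTD r t hx hz h
      exact ⟨a, hmem, ⟨a.2, hx⟩, ⟨a.2, hx⟩, SimpleGraph.Reachable.refl _⟩

/-- if `S` induces a connected subgraph of `G`, then `S ∩ V(G[t])` is a
good subset of `G[t]`. -/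
theorem inter_descVerts_good {V ι : Type*} (G : SimpleGraph V) (T : SimpleGraph ι)
    (X : ι → Set V) (hTD : IsTreeDecomp G T X) (r t : ι) (S : Set V)
    (hS : (G.induce S).Connected) :
    Good G (S ∩ descVerts T X r t) (X t) := by
  by_cases hsub : S ⊆ descVerts T X r t
  · left
    rw [Set.inter_eq_left.mpr hsub]
    exact hS
  · right
    rw [Set.not_subset] at hsub
    obtain ⟨c, hcS, hcD⟩ := hsub
    rintro a ⟨haS, haD⟩
    obtain ⟨w⟩ := hS.preconnected ⟨a, haS⟩ ⟨c, hcS⟩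
    exact walk_reach_lem G T X hTD r t w haD hcD
end

section
/- Let t be an introduce node of a nice tree decomposition with child t', so that X_t = X_{t'} ∪ {v} for a vertex v not in X_{t'}. If S ⊆ V(G[t]) is a good subset of G[t], then S ∩ V(G[t']) is a good subset of G[t']. -/
/-- at an introduce node `t` with child `t'` (`X_t = X_{t'} ∪̇ {v}`,
`V(G[t]) = V(G[t']) ∪ {v}`, and `v` adjacent in `G[t]` only to vertices of `X_{t'}`),
if `S ⊆ V(G[t])` is good for `G[t]`, then `S ∩ V(G[t'])` is good for `G[t']`. -/
theorem introduce_good {V : Type*} (G : SimpleGraph V)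
    (Vt Vt' Xt Xt' : Set V) (v : V)
    (hXt : Xt = insert v Xt') (hvX : v ∉ Xt')
    (hVt : Vt = Vt' ∪ {v}) (hvV : v ∉ Vt')
    (hXV : Xt' ⊆ Vt')
    (hadj : ∀ u ∈ Vt, G.Adj v u → u ∈ Xt')
    (S : Set V) (hSVt : S ⊆ Vt) (hgood : Good G S Xt) :
    Good G (S ∩ Vt') Xt' := by
  classical
  have hmem : ∀ a ∈ S, a ≠ v → a ∈ S ∩ Vt' := by
    intro a ha hav
    refine ⟨ha, ?_⟩
    have := hSVt ha
    rw [hVt] at this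
    rcases this with h | h
    · exact h
    · rw [Set.mem_singleton_iff] at h; exact absurd h hav
  have hreach_adj : ∀ a b, a ∈ S ∩ Vt' → b ∈ S ∩ Vt' → G.Adj a b →
      ReachIn G (S ∩ Vt') a b := by
    intro a b ha hb hab
    exact ⟨ha, hb, SimpleGraph.Adj.reachable (by exact hab)⟩
  have hreach_trans : ∀ a b c, ReachIn G (S ∩ Vt') a b → ReachIn G (S ∩ Vt') b c →
      ReachIn G (S ∩ Vt') a c := by
    rintro a b c ⟨ha, hb, h1⟩ ⟨hb', hc, h2⟩
    exact ⟨ha, hc, h1.trans h2⟩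
  have hrefl : ∀ a, a ∈ S ∩ Vt' → ReachIn G (S ∩ Vt') a a := by
    intro a ha; exact ⟨ha, ha, SimpleGraph.Reachable.refl _⟩
  have key : ∀ (x y : S) (p : (G.induce S).Walk x y), (x : V) ≠ v →
      (((y : V) ≠ v) ∧ ReachIn G (S ∩ Vt') x y) ∨
        ∃ u ∈ Xt', ReachIn G (S ∩ Vt') (x : V) u := by
    intro x y p
    induction p with
    | @nil w => intro hx; exact Or.inl ⟨hx, hrefl _ (hmem _ w.2 hx)⟩
    | @cons a b c hab p ih =>
      intro hx
      by_cases hbv : (b : V) = v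
      · refine Or.inr ⟨(a : V), ?_, hrefl _ (hmem _ a.2 hx)⟩
        have hGab : G.Adj (a : V) (b : V) := hab
        rw [hbv] at hGab
        exact hadj (a : V) (hSVt a.2) hGab.symm
      · have step : ReachIn G (S ∩ Vt') (a : V) (b : V) :=
          hreach_adj _ _ (hmem _ a.2 hx) (hmem _ b.2 hbv) hab
        rcases ih hbv with ⟨hy, hr⟩ | ⟨u, hu, hr⟩
        · exact Or.inl ⟨hy, hreach_trans _ _ _ step hr⟩
        · exact Or.inr ⟨u, hu, hreach_trans _ _ _ step hr⟩
  rcases hgood with hconn | hcomp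
  · by_cases hvS : v ∈ S
    · right
      rintro a ⟨haS, haV⟩
      have hav : a ≠ v := fun h => hvV (h ▸ haV)
      obtain ⟨p⟩ := hconn.preconnected ⟨a, haS⟩ ⟨v, hvS⟩
      rcases key _ _ p hav with ⟨hy, _⟩ | ⟨u, hu, hr⟩
      · exact absurd rfl hy
      · exact ⟨u, hu, hr⟩
    · left
      have heq : S ∩ Vt' = S := Set.inter_eq_left.mpr (fun a ha => by
        have := hSVt ha
        rw [hVt] at this
        rcases this with h | h
        · exact h
        · rw [Set.mem_singleton_iff] at h; subst h; exact absurd ha hvS)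
      rw [heq]; exact hconn
  · right
    rintro a ⟨haS, haV⟩
    have hav : a ≠ v := fun h => hvV (h ▸ haV)
    obtain ⟨b, hbX, ha', hb', hr⟩ := hcomp a haS
    obtain ⟨p⟩ := hr
    rcases key _ _ p hav with ⟨hy, hreach⟩ | ⟨u, hu, hreach⟩
    · refine ⟨b, ?_, hreach⟩
      rw [hXt] at hbX
      rcases hbX with h | h
      · exact absurd h hy
      · exact h
    · exact ⟨u, hu, hreach⟩
end

section
/- Let t be a join node of a nice tree decomposition with children l and r, so X_l = X_r = X_t and V(G[l]) ∩ V(G[r]) = X_t. If S ⊆ V(G[t]) is a good subset of G[t], then S ∩ V(G[l]) is a good subset of G[l] and S ∩ V(G[r]) is a good subset of G[r]. -/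
private lemma walk_reach {V : Type*} (G : SimpleGraph V) (S W Xt : Set V)
    (hcross : ∀ u ∈ S ∩ W, ∀ v ∈ S, v ∉ W → G.Adj u v → u ∈ Xt) :
    ∀ {x y : ↥S} (_ : (G.induce S).Walk x y), (x : V) ∈ W → ((y : V) ∈ Xt ∨ (y : V) ∉ W) →
      ∃ c ∈ Xt, ReachIn G (S ∩ W) x c := by
  intro x y w
  induction w with
  | @nil u =>
    intro hx hy
    have hxX : (u : V) ∈ Xt := hy.resolve_right (fun h => h hx)
    exact ⟨u, hxX, ⟨u.2, hx⟩, ⟨u.2, hx⟩, SimpleGraph.Reachable.refl _⟩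
  | @cons u v z h p ih =>
    intro hx hy
    by_cases hvW : (v : V) ∈ W
    · obtain ⟨c, hcX, hv', hc', hr⟩ := ih hvW hy
      refine ⟨c, hcX, ⟨u.2, hx⟩, hc', ?_⟩
      have hadj : (G.induce (S ∩ W)).Adj ⟨↑u, ⟨u.2, hx⟩⟩ ⟨↑v, hv'⟩ := h
      exact hadj.reachable.trans hr
    · have huX : (u : V) ∈ Xt := hcross ↑u ⟨u.2, hx⟩ ↑v v.2 hvW h
      exact ⟨u, huX, ⟨u.2, hx⟩, ⟨u.2, hx⟩, SimpleGraph.Reachable.refl _⟩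

private lemma aux_good {V : Type*} (G : SimpleGraph V) (S W Xt : Set V)
    (hcross : ∀ u ∈ S ∩ W, ∀ v ∈ S, v ∉ W → G.Adj u v → u ∈ Xt)
    (hgood : Good G S Xt) : Good G (S ∩ W) Xt := by
  rcases hgood with hconn | hreach
  · by_cases hsub : S ⊆ W
    · rw [Set.inter_eq_left.mpr hsub]
      exact Or.inl hconn
    · obtain ⟨z, hzS, hzW⟩ := Set.not_subset.mp hsub
      refine Or.inr fun a ⟨haS, haW⟩ => ?_
      obtain ⟨w⟩ := hconn.preconnected ⟨a, haS⟩ ⟨z, hzS⟩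
      exact walk_reach G S W Xt hcross w haW (Or.inr hzW)
  · refine Or.inr fun a ⟨haS, haW⟩ => ?_
    obtain ⟨b, hbX, ha', hb', hr⟩ := hreach a haS
    obtain ⟨w⟩ := hr
    exact walk_reach G S W Xt hcross w haW (Or.inl hbX)

/-- at a join node `t` with children `l, r` (`X_l = X_r = X_t`,
`V(G[t]) = V(G[l]) ∪ V(G[r])`, `V(G[l]) ∩ V(G[r]) = X_t`, and no edges between
`V(G[l]) \ X_t` and `V(G[r]) \ X_t`), if `S ⊆ V(G[t])` is good for `G[t]`, then
`S ∩ V(G[l])` is good for `G[l]` and `S ∩ V(G[r])` is good for `G[r]`. -/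
theorem join_good {V : Type*} (G : SimpleGraph V)
    (Vt Vl Vr Xt : Set V)
    (hVt : Vt = Vl ∪ Vr) (hInter : Vl ∩ Vr = Xt)
    (hNoEdge : ∀ a ∈ Vl \ Xt, ∀ b ∈ Vr \ Xt, ¬ G.Adj a b)
    (S : Set V) (hSVt : S ⊆ Vt) (hgood : Good G S Xt) :
    Good G (S ∩ Vl) Xt ∧ Good G (S ∩ Vr) Xt := by
  have hXl : Xt ⊆ Vl := hInter ▸ Set.inter_subset_left
  have hXr : Xt ⊆ Vr := hInter ▸ Set.inter_subset_right
  constructor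
  · refine aux_good G S Vl Xt ?_ hgood
    intro u ⟨huS, huL⟩ v hvS hvL hadj
    have hvVr : v ∈ Vr := (hVt ▸ hSVt hvS).resolve_left hvL
    by_contra huX
    exact hNoEdge u ⟨huL, huX⟩ v ⟨hvVr, fun h => hvL (hXl h)⟩ hadj
  · refine aux_good G S Vr Xt ?_ hgood
    intro u ⟨huS, huR⟩ v hvS hvR hadj
    have hvVl : v ∈ Vl := (hVt ▸ hSVt hvS).resolve_right hvR
    by_contra huX
    exact hNoEdge v ⟨hvVl, fun h => hvR (hXr h)⟩ u ⟨huR, huX⟩ hadj.symm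
end

section
/- Let G be a graph, v a vertex of G, and for each k let A_k be the number of vertex subsets S of size k with v ∈ S such that G[S] is connected, and B_k the number of vertex subsets S of size k with v ∉ S such that G[S] is connected. Then the Shapley value of v in the connectivity game v^conn equals (1/|V|!) · [ A_2 · (|V|−2)! + Σ_{k=2}^{|V|−1} (A_{k+1} − B_k) · k! · (|V|−k−1)! ]. -/
/-!
Grouping the coalitions `S ∌ v` by their size `k`, all of them carry the Shapley weight
`k! (n - k - 1)! / n!` (with `n = |V|`), so only the sums of `vconn G (insert v S)` and of
`vconn G S` over `k`-subsets of `V \ {v}` matter. The first sum counts connected coalitions of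
size `k + 1` through `v` and the second connected coalitions of size `k` avoiding `v`, except
that coalitions with at most one member are worth `0`: this kills the `k = 0` term and the
subtracted part of the `k = 1` term, which leaves the separate summand `A₂ (n - 2)!`.
-/

open Finset Classical

/-- The Shapley value of player `i` in the coalitional game with characteristic function `w`. -/
noncomputable def shapley {N : Type*} [Fintype N] [DecidableEq N]
    (w : Finset N → ℝ) (i : N) : ℝ :=
  ∑ S ∈ (Finset.univ.erase i).powerset,
    ((S.card.factorial * (Fintype.card N - S.card - 1).factorial : ℕ) : ℝ)
      / ((Fintype.card N).factorial : ℝ) * (w (insert i S) - w S)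

/-- The connectivity game `v^conn`: a coalition has value 1 iff it induces a connected
subgraph and has more than one member. -/
noncomputable def vconn {V : Type*} [Fintype V] [DecidableEq V]
    (G : SimpleGraph V) (S : Finset V) : ℝ :=
  if (G.induce (↑S : Set V)).Connected ∧ 1 < S.card then 1 else 0

/-- Number of connected coalitions of size `k` containing `v`. -/
noncomputable def numConnWith {V : Type*} [Fintype V] [DecidableEq V]
    (G : SimpleGraph V) (v : V) (k : ℕ) : ℕ :=
  ((Finset.univ.powersetCard k).filter
    (fun S : Finset V => v ∈ S ∧ (G.induce (↑S : Set V)).Connected)).card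

/-- Number of connected coalitions of size `k` not containing `v`. -/
noncomputable def numConnWithout {V : Type*} [Fintype V] [DecidableEq V]
    (G : SimpleGraph V) (v : V) (k : ℕ) : ℕ :=
  ((Finset.univ.powersetCard k).filter
    (fun S : Finset V => v ∉ S ∧ (G.induce (↑S : Set V)).Connected)).card

namespace Finset

variable {α M : Type*} [AddCommMonoid M]

lemma sum_range_eq_add_sum_Icc (f : ℕ → M) {n : ℕ} (hn : 2 ≤ n) :
    ∑ j ∈ range n, f j = f 0 + f 1 + ∑ j ∈ Icc 2 (n - 1), f j := by
  rw [← sum_range_add_sum_Ico f hn, sum_range_succ, sum_range_one,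
    Icc_sub_one_right_eq_Ico_of_not_isMin (by simp; omega)]

lemma sum_powersetCard_erase_insert [Fintype α] [DecidableEq α] (a : α) (k : ℕ)
    (f : Finset α → M) :
    ∑ S ∈ (univ.erase a).powersetCard k, f (insert a S) =
      ∑ T ∈ (univ.powersetCard (k + 1)).filter (a ∈ ·), f T :=
  sum_nbij' (insert a) (erase · a)
    (by intro S hS; simp_all [mem_powersetCard, subset_erase])
    (by intro T hT; simp_all [mem_powersetCard, subset_erase])
    (by intro S hS; simp_all [mem_powersetCard, subset_erase])
    (by intro T hT; simp_all)
    (fun _ _ => rfl)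

end Finset

lemma shapley_eq_sum_powersetCard {N : Type*} [Fintype N] [DecidableEq N]
    (w : Finset N → ℝ) (i : N) :
    shapley w i = ∑ j ∈ range (Fintype.card N),
      ((j.factorial * (Fintype.card N - j - 1).factorial : ℕ) : ℝ) /
        (Fintype.card N).factorial *
        ∑ S ∈ (univ.erase i).powersetCard j, (w (insert i S) - w S) := by
  have hcard : (univ.erase i).card + 1 = Fintype.card N := by
    rw [card_erase_of_mem (mem_univ i), card_univ,
      Nat.sub_add_cancel (Fintype.card_pos_iff.mpr ⟨i⟩)]
  rw [shapley, sum_powerset, hcard]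
  refine sum_congr rfl fun j _ => ?_
  rw [mul_sum]
  refine sum_congr rfl fun S hS => ?_
  rw [(mem_powersetCard.mp hS).2]

section vconn

variable {V : Type*} [Fintype V] [DecidableEq V] (G : SimpleGraph V)

lemma sum_vconn_eq_card_filter_connected {𝒮 : Finset (Finset V)}
    (h : ∀ S ∈ 𝒮, 1 < S.card) :
    ∑ S ∈ 𝒮, vconn G S =
      (𝒮.filter fun S : Finset V => (G.induce (↑S : Set V)).Connected).card := by
  rw [← sum_boole]
  refine sum_congr rfl fun S hS => ?_
  simp [vconn, h S hS]

lemma sum_vconn_eq_zero {𝒮 : Finset (Finset V)} (h : ∀ S ∈ 𝒮, S.card ≤ 1) :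
    ∑ S ∈ 𝒮, vconn G S = 0 :=
  sum_eq_zero fun S hS => by simp [vconn, (h S hS).not_gt]

lemma sum_vconn_powersetCard_erase (v : V) (k : ℕ) :
    ∑ S ∈ (univ.erase v).powersetCard k, vconn G S =
      if 1 < k then (numConnWithout G v k : ℝ) else 0 := by
  split_ifs with hk
  · rw [sum_vconn_eq_card_filter_connected G fun S hS => (mem_powersetCard.mp hS).2 ▸ hk,
      numConnWithout]
    congr 2
    ext S
    simp [mem_powersetCard, subset_erase, and_assoc, and_left_comm]
  · exact sum_vconn_eq_zero G fun S hS => (mem_powersetCard.mp hS).2 ▸ not_lt.mp hk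

lemma sum_vconn_insert_powersetCard_erase (v : V) (k : ℕ) :
    ∑ S ∈ (univ.erase v).powersetCard k, vconn G (insert v S) =
      if 1 ≤ k then (numConnWith G v (k + 1) : ℝ) else 0 := by
  rw [sum_powersetCard_erase_insert]
  split_ifs with hk
  · rw [sum_vconn_eq_card_filter_connected G fun T hT => ?_, numConnWith, filter_filter]
    rw [(mem_powersetCard.mp (mem_filter.mp hT).1).2]
    omega
  · refine sum_vconn_eq_zero G fun T hT => ?_
    rw [(mem_powersetCard.mp (mem_filter.mp hT).1).2]
    omega

end vconn

/-- formula for the Shapley value of the connectivity game in terms of the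
counts of connected coalitions of each size containing / not containing `v`. -/
theorem shapley_vconn_formula {V : Type*} [Fintype V] [DecidableEq V]
    (G : SimpleGraph V) (v : V) :
    shapley (vconn G) v =
      (1 / ((Fintype.card V).factorial : ℝ)) *
        ((numConnWith G v 2 : ℝ) * ((Fintype.card V - 2).factorial : ℕ) +
          ∑ k ∈ Finset.Icc 2 (Fintype.card V - 1),
            ((numConnWith G v (k + 1) : ℝ) - (numConnWithout G v k : ℝ)) *
              (k.factorial : ℕ) * (((Fintype.card V - k - 1).factorial : ℕ) : ℝ)) := by
  simp_rw [shapley_eq_sum_powersetCard, sum_sub_distrib, sum_vconn_insert_powersetCard_erase,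
    sum_vconn_powersetCard_erase]
  obtain hn | hn := Nat.lt_or_ge (Fintype.card V) 2
  · have hcard : Fintype.card V = 1 := by have := Fintype.card_pos_iff.mpr ⟨v⟩; omega
    have hA : numConnWith G v 2 = 0 := by
      simp [numConnWith, powersetCard_eq_empty.mpr (by simp [hcard] : #(univ : Finset V) < 2)]
    simp [hcard, hA]
  · rw [sum_range_eq_add_sum_Icc _ hn, mul_add, mul_sum]
    congr 1
    · simp [Nat.sub_sub]
      ring
    · refine sum_congr rfl fun k hk => ?_
      have h2k : 2 ≤ k := (mem_Icc.mp hk).1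
      rw [if_pos (by omega), if_pos (by omega)]
      push_cast
      field_simp
end

section
/- If a connected graph G has at most C induced connected subgraphs containing any fixed vertex, with C ≥ 2, then for any vertex v and any radius r ≥ 1, the number of vertices at distance exactly r from v is at most log₂ C. -/
open Finset Classical

private lemma induce_reach {V : Type*} (G : SimpleGraph V) (S : Set V) :
    ∀ {a b : V} (p : G.Walk a b) (hp : ∀ w ∈ p.support, w ∈ S),
      (G.induce S).Reachable ⟨a, hp a p.start_mem_support⟩ ⟨b, hp b p.end_mem_support⟩ := by
  intro a b p
  induction p with
  | nil => intro hp; rfl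
  | @cons a c b h q ih =>
      intro hp
      have hq : ∀ w ∈ q.support, w ∈ S := fun w hw => hp w (by simp [hw])
      have h1 : (G.induce S).Adj ⟨a, hp a (SimpleGraph.Walk.start_mem_support _)⟩
          ⟨c, hq c q.start_mem_support⟩ := h
      exact (SimpleGraph.Adj.reachable h1).trans (ih hq)

/-- if a connected graph `G` has at most `C` induced connected subgraphs
containing any fixed vertex, with `C ≥ 2`, then for any vertex `v` and radius `r ≥ 1`,
the number of vertices at distance exactly `r` from `v` is at most `log₂ C`. -/
theorem level_size_le_log {V : Type*} [Fintype V] [DecidableEq V]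
    (G : SimpleGraph V) (hG : G.Connected) (C : ℕ) (hC : 2 ≤ C)
    (hcount : ∀ u : V,
      ((Finset.univ.powerset).filter
        (fun S : Finset V => u ∈ S ∧ (G.induce (↑S : Set V)).Connected)).card ≤ C)
    (v : V) (r : ℕ) (hr : 1 ≤ r) :
    ((Finset.univ.filter (fun u : V => G.dist v u = r)).card : ℝ) ≤ Real.logb 2 C := by
  classical
  set L : Finset V := Finset.univ.filter (fun u : V => G.dist v u = r) with hL
  set B : Finset V := Finset.univ.filter (fun u : V => G.dist v u ≤ r - 1) with hB
  -- For each T ⊆ L, the set B ∪ T induces a connected subgraph containing v.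
  have key : ∀ T ∈ L.powerset, v ∈ B ∪ T ∧ (G.induce (↑(B ∪ T) : Set V)).Connected := by
    intro T hT
    rw [Finset.mem_powerset] at hT
    have hvB : v ∈ B := by
      simp [hB, SimpleGraph.dist_self]
    have hmem : ∀ u ∈ B ∪ T, G.dist v u ≤ r := by
      intro u hu
      rcases Finset.mem_union.mp hu with h | h
      · have := (Finset.mem_filter.mp h).2; omega
      · have := (Finset.mem_filter.mp (hT h)).2; omega
    -- every vertex in B ∪ T is reachable from v inside the induced graph
    have reach : ∀ u (hu : u ∈ B ∪ T),
        (G.induce (↑(B ∪ T) : Set V)).Reachable ⟨v, by exact_mod_cast Finset.mem_union_left _ hvB⟩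
          ⟨u, by exact_mod_cast hu⟩ := by
      intro u hu
      obtain ⟨p, hp⟩ := hG.exists_walk_length_eq_dist v u
      have hsupp : ∀ w ∈ p.support, w ∈ (↑(B ∪ T) : Set V) := by
        intro w hw
        rcases (SimpleGraph.Walk.mem_support_iff_exists_append).mp hw with ⟨q, q', hqq⟩
        by_cases hwu : w = u
        · subst hwu; exact_mod_cast hu
        · have hlen : q.length + q'.length = G.dist v u := by
            rw [← hp, hqq, SimpleGraph.Walk.length_append]
          have hq'pos : 1 ≤ q'.length := by
            by_contra hcon
            push_neg at hcon
            interval_cases h : q'.length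
            · exact hwu (q'.eq_of_length_eq_zero (by omega) ▸ rfl)
          have hdw : G.dist v w ≤ q.length := SimpleGraph.dist_le q
          have hdu : G.dist v u ≤ r := hmem u hu
          have hle : G.dist v w ≤ r - 1 := by omega
          have hwB : w ∈ B := Finset.mem_filter.mpr ⟨Finset.mem_univ _, hle⟩
          exact Finset.mem_coe.mpr (Finset.mem_union_left _ hwB)
      have := induce_reach G (↑(B ∪ T) : Set V) p hsupp
      convert this using 2
    refine ⟨Finset.mem_union_left _ hvB, ?_⟩
    haveI : Nonempty (↑(↑(B ∪ T) : Set V)) :=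
      ⟨⟨v, by exact_mod_cast Finset.mem_union_left _ hvB⟩⟩
    exact ⟨fun a b =>
      ((reach a.1 (by exact_mod_cast a.2)).symm.trans (reach b.1 (by exact_mod_cast b.2)))⟩
  -- injectivity of T ↦ B ∪ T
  have hBL : ∀ u ∈ B, u ∉ L := by
    intro u hu hmem
    have h1 := (Finset.mem_filter.mp hu).2
    have h2 := (Finset.mem_filter.mp hmem).2
    omega
  have hinj : Set.InjOn (fun T => B ∪ T) ↑L.powerset := by
    intro T1 h1 T2 h2 heq
    simp only [Finset.coe_powerset, Set.mem_preimage, Set.mem_powerset_iff,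
      Finset.coe_subset] at h1 h2
    have e1 : (B ∪ T1) ∩ L = T1 := by
      rw [Finset.union_inter_distrib_right]
      rw [Finset.inter_eq_left.mpr h1]
      rw [Finset.eq_empty_iff_forall_notMem.mpr (fun u hu =>
        hBL u (Finset.mem_inter.mp hu).1 (Finset.mem_inter.mp hu).2), Finset.empty_union]
    have e2 : (B ∪ T2) ∩ L = T2 := by
      rw [Finset.union_inter_distrib_right]
      rw [Finset.inter_eq_left.mpr h2]
      rw [Finset.eq_empty_iff_forall_notMem.mpr (fun u hu =>
        hBL u (Finset.mem_inter.mp hu).1 (Finset.mem_inter.mp hu).2), Finset.empty_union]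
    have heq' : B ∪ T1 = B ∪ T2 := heq
    calc T1 = (B ∪ T1) ∩ L := e1.symm
      _ = (B ∪ T2) ∩ L := by rw [heq']
      _ = T2 := e2
  have hmaps : ∀ T ∈ L.powerset, (B ∪ T) ∈
      ((Finset.univ.powerset).filter
        (fun S : Finset V => v ∈ S ∧ (G.induce (↑S : Set V)).Connected)) := by
    intro T hT
    exact Finset.mem_filter.mpr ⟨Finset.mem_powerset.mpr (Finset.subset_univ _), key T hT⟩
  have hcard : 2 ^ L.card ≤ C := by
    calc 2 ^ L.card = L.powerset.card := (Finset.card_powerset L).symm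
      _ ≤ _ := Finset.card_le_card_of_injOn _ hmaps hinj
      _ ≤ C := hcount v
  -- conclude with logb
  have h2 : (2 : ℝ) ^ L.card ≤ (C : ℝ) := by exact_mod_cast hcard
  have : (L.card : ℝ) = Real.logb 2 ((2 : ℝ) ^ L.card) := by
    rw [Real.logb_pow, Real.logb_self_eq_one (by norm_num)]
    ring
  rw [this]
  exact Real.logb_le_logb_of_le (by norm_num) (by positivity) h2
end

section
/- A connected graph G with at most C induced connected subgraphs (C ≥ 2) has pathwidth, and hence treewidth, at most 2·log₂ C. -/
open Finset Classical

/-- `G` has a tree decomposition of width at most `k`. -/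
def TreewidthAtMost {V : Type*} (G : SimpleGraph V) (k : ℕ) : Prop :=
  ∃ (ι : Type) (T : SimpleGraph ι) (X : ι → Set V),
    IsTreeDecomp G T X ∧ ∀ t : ι, (X t).Finite ∧ (X t).ncard ≤ k + 1

/-- `G` has a path decomposition (a tree decomposition whose tree is a path) of width at
most `k`. -/
def PathwidthAtMost {V : Type*} (G : SimpleGraph V) (k : ℕ) : Prop :=
  ∃ (m : ℕ) (X : Fin m → Set V),
    IsTreeDecomp G (SimpleGraph.pathGraph m) X ∧
    ∀ t : Fin m, (X t).Finite ∧ (X t).ncard ≤ k + 1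

/-!
Layer the vertices by their distance from a root `r`. The ball of radius `i` together with any
subset of the sphere of radius `i + 1` induces a connected subgraph, and distinct subsets give
distinct such sets; hence `2 ^ #(sphere (i + 1)) ≤ C`, and also `#(sphere 0) = 1 ≤ log₂ C`.
Edges only join equal or consecutive layers, so the bags `sphere t ∪ sphere (t + 1)`, strung
along a path, form a path decomposition whose bags have at most `2 log₂ C` vertices.
-/

namespace SimpleGraph

variable {V : Type*} {G : SimpleGraph V}

theorem isAcyclic_pathGraph (m : ℕ) : (pathGraph m).IsAcyclic := by
  refine isAcyclic_iff_forall_adj_isBridge.mpr fun v w hadj ↦ ?_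
  wlog h : v.val + 1 = w.val
  · rw [Sym2.eq_swap]
    exact this m w v hadj.symm ((pathGraph_adj.mp hadj).resolve_left h)
  rw [isBridge_iff]
  intro hreach
  -- no walk avoiding the edge `s(v, w)` leaves `{t | t ≤ v}`
  let H := (⊤ : ((pathGraph m).deleteEdges {s(v, w)}).Subgraph).induce {t | t.val ≤ v.val}
  have hw : w ∈ H.verts :=
    hreach.mem_subgraphVerts (fun a ha b hab ↦ ?_) (show v.val ≤ v.val from le_rfl)
  · exact absurd hw (by simp [H]; omega)
  refine ⟨ha, ?_, hab⟩
  rw [deleteEdges_adj, pathGraph_adj] at hab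
  simp only [H, Subgraph.induce_verts, Set.mem_ofPred_eq] at ha ⊢
  by_contra hb
  exact hab.2 (by rw [Set.mem_singleton_iff, Sym2.eq_iff]; left; constructor <;> ext <;> omega)

theorem isTree_pathGraph {m : ℕ} (hm : 0 < m) : (pathGraph m).IsTree := by
  obtain ⟨n, rfl⟩ := Nat.exists_eq_add_of_lt hm
  exact ⟨pathGraph_connected _, isAcyclic_pathGraph _⟩

theorem IsAcyclic.mem_support_of_adj (hG : G.IsAcyclic) {u v w : V} (h : G.Adj u v)
    {p : G.Walk u v} (hp : p.IsPath) (hw : w ∈ p.support) : w = u ∨ w = v := by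
  obtain rfl : p = .cons h .nil := congrArg Subtype.val <|
    (hG.subsingleton_path u v).elim ⟨p, hp⟩ ⟨_, Walk.IsPath.mk' (by simp [h.ne])⟩
  simpa using hw

theorem Walk.dist_lt_of_mem_support {u v w : V} {p : G.Walk u v} (hp : p.length = G.dist u v)
    (hw : w ∈ p.support) (hwv : w ≠ v) : G.dist u w < G.dist u v := by
  classical
  exact (dist_le _).trans_lt (hp ▸ length_takeUntil_lt_length hw hwv)

theorem Connected.induce_connected_between_balls (hG : G.Connected) (r : V) (i : ℕ)
    {T : Set V} (hball : ∀ v, G.dist r v ≤ i → v ∈ T)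
    (hT : ∀ v ∈ T, G.dist r v ≤ i + 1) : (G.induce T).Connected := by
  refine (connected_iff_exists_forall_reachable _).mpr ⟨⟨r, hball r (by simp)⟩, ?_⟩
  rintro ⟨v, hv⟩
  obtain ⟨p, hp⟩ := hG.exists_walk_length_eq_dist r v
  -- a shortest path from `r` to `v` stays in the ball of radius `i` until it reaches `v`
  refine ⟨p.induce T fun w hw ↦ ?_⟩
  by_cases hwv : w = v
  · exact hwv ▸ hv
  · exact hball w (by have := p.dist_lt_of_mem_support hp hw hwv; have := hT v hv; omega)

theorem two_pow_card_le_card_connected [Fintype V] [DecidableEq V] {A B : Finset V}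
    (hAB : Disjoint B A)
    (hconn : ∀ S ⊆ A, (G.induce (↑(B ∪ S) : Set V)).Connected) :
    2 ^ #A ≤ #{S : Finset V | (G.induce (S : Set V)).Connected} := by
  rw [← card_powerset]
  refine card_le_card_of_injOn (B ∪ ·) (fun S hS ↦ ?_) (fun S hS S' hS' h ↦ ?_)
  · simpa using hconn S (mem_powerset.mp hS)
  · rw [← union_sdiff_cancel_left (hAB.mono_right (mem_powerset.mp hS)),
      ← union_sdiff_cancel_left (hAB.mono_right (mem_powerset.mp hS'))]
    exact congrArg (· \ B) h

theorem Connected.card_dist_eq_le_log [Fintype V] [DecidableEq V] (hG : G.Connected) (r : V)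
    {C : ℕ} (hC : 2 ≤ C) (hcount : #{S : Finset V | (G.induce (S : Set V)).Connected} ≤ C)
    (i : ℕ) :
    #{v | G.dist r v = i} ≤ Nat.log 2 C := by
  refine Nat.le_log_of_pow_le one_lt_two ?_
  cases i with
  | zero =>
    have : ({v | G.dist r v = 0} : Finset V) = {r} := by
      ext v
      simp only [mem_filter, mem_univ, true_and, mem_singleton, hG.dist_eq_zero_iff, eq_comm]
    rwa [this, card_singleton, pow_one]
  | succ i =>
    refine le_trans (two_pow_card_le_card_connected (G := G) (B := {v | G.dist r v ≤ i})
      (disjoint_filter.mpr fun v _ hv ↦ by omega) fun S hS ↦ ?_) hcount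
    refine hG.induce_connected_between_balls r i (fun v hv ↦ by simp [hv]) fun v hv ↦ ?_
    simp only [coe_union, coe_filter, Set.mem_union, Set.mem_ofPred_eq, mem_coe] at hv
    rcases hv with hv | hv
    · omega
    · simpa using (mem_filter.mp (hS hv)).2.le

end SimpleGraph

open SimpleGraph

section Layering

variable {V : Type*} {G : SimpleGraph V}

theorem isTreeDecomp_pathGraph_of_layering [Nonempty V] {m : ℕ} (ℓ : V → ℕ)
    (hℓ : ∀ v, ℓ v < m) (hadj : ∀ u v, G.Adj u v → ℓ v ≤ ℓ u + 1) :
    IsTreeDecomp G (pathGraph m) fun t ↦ {v | ℓ v = t ∨ ℓ v = t + 1} := by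
  refine ⟨isTree_pathGraph ((Nat.zero_le _).trans_lt (hℓ (Classical.arbitrary V))),
    fun v ↦ ⟨⟨ℓ v, hℓ v⟩, Or.inl rfl⟩, fun u v huv ↦ ?_,
    fun v t₁ t₂ h₁ h₂ p hp t ht ↦ ?_⟩
  · have := hadj u v huv
    have := hadj v u huv.symm
    refine ⟨⟨min (ℓ u) (ℓ v), (min_le_left _ _).trans_lt (hℓ u)⟩, ?_, ?_⟩ <;>
      simp only [Set.mem_ofPred_eq] <;> omega
  -- the bags containing `v` are those indexed by `ℓ v - 1` and `ℓ v`, which are adjacent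
  simp only [Set.mem_ofPred_eq] at h₁ h₂
  rcases eq_or_ne t₁ t₂ with rfl | hne
  · obtain rfl := Walk.eq_nil_iff_nil.mpr (Walk.isPath_iff_nil.mp hp)
    obtain rfl := by simpa using ht
    exact h₁
  · have h₁₂ : (pathGraph m).Adj t₁ t₂ :=
      pathGraph_adj.mpr (by rw [Ne, Fin.ext_iff] at hne; omega)
    rcases (isAcyclic_pathGraph m).mem_support_of_adj h₁₂ hp ht with rfl | rfl <;> assumption

theorem pathwidthAtMost_of_layering [Fintype V] [Nonempty V] (ℓ : V → ℕ)
    (hadj : ∀ u v, G.Adj u v → ℓ v ≤ ℓ u + 1) {k : ℕ}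
    (hk : ∀ i, #{v | ℓ v = i} ≤ k) : PathwidthAtMost G (2 * k) := by
  refine ⟨univ.sup ℓ + 1, _, isTreeDecomp_pathGraph_of_layering ℓ
    (fun v ↦ Nat.lt_succ_of_le (le_sup (mem_univ v))) hadj, fun t ↦ ?_⟩
  have hbag : {v | ℓ v = t ∨ ℓ v = t + 1} =
      ↑(({v | ℓ v = t} : Finset V) ∪ ({v | ℓ v = t + 1} : Finset V)) := by
    ext; simp
  rw [hbag, Set.ncard_coe_finset]
  refine ⟨finite_toSet _, ?_⟩
  have := card_union_le {v | ℓ v = t} {v | ℓ v = t + 1}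
  have := hk t
  have := hk (t + 1)
  omega

theorem PathwidthAtMost.treewidthAtMost {k : ℕ} (h : PathwidthAtMost G k) :
    TreewidthAtMost G k :=
  let ⟨m, X, hX, hbag⟩ := h
  ⟨Fin m, _, X, hX, hbag⟩

end Layering

/-- a connected graph `G` with at most `C` induced connected subgraphs
(`C ≥ 2`) has pathwidth, and hence treewidth, at most `2 · log₂ C`. -/
theorem pathwidth_le_two_log {V : Type*} [Fintype V] [DecidableEq V]
    (G : SimpleGraph V) (hG : G.Connected) (C : ℕ) (hC : 2 ≤ C)
    (hcount : ((Finset.univ.powerset).filter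
        (fun S : Finset V => (G.induce (↑S : Set V)).Connected)).card ≤ C) :
    ∃ k : ℕ, (k : ℝ) ≤ 2 * Real.logb 2 C ∧
      PathwidthAtMost G k ∧ TreewidthAtMost G k := by
  have := hG.nonempty
  let r := Classical.arbitrary V
  rw [powerset_univ] at hcount
  have hpw : PathwidthAtMost G (2 * Nat.log 2 C) :=
    pathwidthAtMost_of_layering (G.dist r)
      (fun u v huv ↦ by have := huv.diff_dist_adj (u := r); omega)
      (hG.card_dist_eq_le_log r hC hcount)
  refine ⟨_, ?_, hpw, hpw.treewidthAtMost⟩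
  have := Real.natLog_le_logb C 2
  push_cast at this ⊢
  linarith
end

section
/- Let t be a join node with children l, r of a nice tree decomposition, and let S_l ⊆ V(G[l]) and S_r ⊆ V(G[r]) be good subsets with S_l ∩ X_t = S_r ∩ X_t = R. Then S = S_l ∪ S_r satisfies |S| = |S_l| + |S_r| − |R|, and the connected-component partition of R induced by G[S] is the finest common coarsening (join in the partition lattice) of the partitions of R induced by G[S_l] and G[S_r]. -/
lemma reachIn_mono {V : Type*} (G : SimpleGraph V) {S T : Set V} (hST : S ⊆ T)
    {a b : V} (h : ReachIn G S a b) : ReachIn G T a b := by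
  obtain ⟨ha, hb, hr⟩ := h
  refine ⟨hST ha, hST hb, ?_⟩
  let f : G.induce S →g G.induce T := ⟨fun x => ⟨x.val, hST x.2⟩, fun hadj => hadj⟩
  exact hr.map f

lemma reachIn_symm {V : Type*} (G : SimpleGraph V) {S : Set V} {a b : V}
    (h : ReachIn G S a b) : ReachIn G S b a := by
  obtain ⟨ha, hb, hr⟩ := h
  exact ⟨hb, ha, hr.symm⟩

lemma reachIn_trans {V : Type*} (G : SimpleGraph V) {S : Set V} {a b c : V}
    (h1 : ReachIn G S a b) (h2 : ReachIn G S b c) : ReachIn G S a c := by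
  obtain ⟨ha, hb, hr1⟩ := h1
  obtain ⟨hb', hc, hr2⟩ := h2
  exact ⟨ha, hc, hr1.trans hr2⟩

lemma reachIn_of_adj {V : Type*} (G : SimpleGraph V) {S : Set V} {a b : V}
    (ha : a ∈ S) (hb : b ∈ S) (h : G.Adj a b) : ReachIn G S a b :=
  ⟨ha, hb, SimpleGraph.Adj.reachable (by exact h)⟩

/-- at a join node `t` with children `l, r`, if `S_l ⊆ V(G[l])` and
`S_r ⊆ V(G[r])` are good subsets with `S_l ∩ X_t = S_r ∩ X_t = R`, then
`S = S_l ∪ S_r` satisfies `|S| = |S_l| + |S_r| − |R|`, and the connected-component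
partition of `R` induced by `G[S]` is the join (finest common coarsening) of the
partitions of `R` induced by `G[S_l]` and `G[S_r]`: two elements of `R` lie in the same
component of `G[S]` iff they are related by the equivalence closure of the union of the
two component relations. -/
theorem join_characteristic {V : Type*} (G : SimpleGraph V)
    (Vl Vr Xt : Set V)
    (hInter : Vl ∩ Vr = Xt)
    (hNoEdge : ∀ a ∈ Vl \ Xt, ∀ b ∈ Vr \ Xt, ¬ G.Adj a b)
    (Sl Sr R : Set V) (hSl : Sl ⊆ Vl) (hSr : Sr ⊆ Vr)
    (hSlfin : Sl.Finite) (hSrfin : Sr.Finite)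
    (hGoodl : Good G Sl Xt) (hGoodr : Good G Sr Xt)
    (hRl : Sl ∩ Xt = R) (hRr : Sr ∩ Xt = R) :
    (Sl ∪ Sr).ncard = Sl.ncard + Sr.ncard - R.ncard ∧
    (∀ a ∈ R, ∀ b ∈ R,
      (ReachIn G (Sl ∪ Sr) a b ↔
        Relation.EqvGen (fun x y => ReachIn G Sl x y ∨ ReachIn G Sr x y) a b)) := by
  have hRSl : R ⊆ Sl := by rw [← hRl]; exact Set.inter_subset_left
  have hRSr : R ⊆ Sr := by rw [← hRr]; exact Set.inter_subset_left
  have hInterR : Sl ∩ Sr = R := by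
    apply Set.Subset.antisymm
    · intro x hx
      have hxXt : x ∈ Xt := by
        rw [← hInter]; exact ⟨hSl hx.1, hSr hx.2⟩
      rw [← hRl]; exact ⟨hx.1, hxXt⟩
    · intro x hx; exact ⟨hRSl hx, hRSr hx⟩
  constructor
  · have key := Set.ncard_union_add_ncard_inter Sl Sr hSlfin hSrfin
    rw [hInterR] at key
    have hRcard : R.ncard ≤ Sl.ncard := Set.ncard_le_ncard hRSl hSlfin
    omega
  · intro a ha b hb
    constructor
    · -- forward: walk in union splits into segments
      rintro ⟨haU, hbU, hr⟩
      obtain ⟨w⟩ := hr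
      set r := fun x y => ReachIn G Sl x y ∨ ReachIn G Sr x y with hrdef
      suffices H : ∀ (u v : ↥(Sl ∪ Sr)), (G.induce (Sl ∪ Sr)).Walk u v →
          Relation.EqvGen r u.val v.val by
        exact H _ _ w
      intro u v w
      induction w with
      | nil => exact Relation.EqvGen.refl _
      | @cons x y z hadj p ih =>
        have hGadj : G.Adj x.val y.val := hadj
        have hx := x.2
        have hy := y.2
        have hstep : r x.val y.val := by
          -- show both in Sl or both in Sr
          rcases hx with hxl | hxr
          · rcases hy with hyl | hyr
            · exact Or.inl (reachIn_of_adj G hxl hyl hGadj)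
            · by_cases hySl : y.val ∈ Sl
              · exact Or.inl (reachIn_of_adj G hxl hySl hGadj)
              · by_cases hxSr : x.val ∈ Sr
                · exact Or.inr (reachIn_of_adj G hxSr hyr hGadj)
                · exfalso
                  have hxXt : x.val ∉ Xt := fun h => hxSr (hRSr (hRl ▸ ⟨hxl, h⟩))
                  have hyXt : y.val ∉ Xt := fun h => hySl (hRSl (hRr ▸ ⟨hyr, h⟩))
                  exact hNoEdge x.val ⟨hSl hxl, hxXt⟩ y.val ⟨hSr hyr, hyXt⟩ hGadj
          · rcases hy with hyl | hyr
            · by_cases hySr : y.val ∈ Sr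
              · exact Or.inr (reachIn_of_adj G hxr hySr hGadj)
              · by_cases hxSl : x.val ∈ Sl
                · exact Or.inl (reachIn_of_adj G hxSl hyl hGadj)
                · exfalso
                  have hxXt : x.val ∉ Xt := fun h => hxSl (hRSl (hRr ▸ ⟨hxr, h⟩))
                  have hyXt : y.val ∉ Xt := fun h => hySr (hRSr (hRl ▸ ⟨hyl, h⟩))
                  exact hNoEdge y.val ⟨hSl hyl, hyXt⟩ x.val ⟨hSr hxr, hxXt⟩ hGadj.symm
            · exact Or.inr (reachIn_of_adj G hxr hyr hGadj)
        exact Relation.EqvGen.trans _ _ _ (Relation.EqvGen.rel _ _ hstep) ih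
    · -- backward
      intro h
      have H : ∀ x y : V,
          Relation.EqvGen (fun x y => ReachIn G Sl x y ∨ ReachIn G Sr x y) x y →
          x = y ∨ ReachIn G (Sl ∪ Sr) x y := by
        intro x y hxy
        induction hxy with
        | rel u v huv =>
          rcases huv with h' | h'
          · exact Or.inr (reachIn_mono G Set.subset_union_left h')
          · exact Or.inr (reachIn_mono G Set.subset_union_right h')
        | refl u => exact Or.inl rfl
        | symm u v _ ih =>
          rcases ih with rfl | h' <;> [exact Or.inl rfl; exact Or.inr (reachIn_symm G h')]
        | trans u v w _ _ ih1 ih2 =>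
          rcases ih1 with rfl | h1
          · exact ih2
          · rcases ih2 with rfl | h2
            · exact Or.inr h1
            · exact Or.inr (reachIn_trans G h1 h2)
      rcases H a b h with rfl | h'
      · exact ⟨Or.inl (hRSl ha), Or.inl (hRSl ha), SimpleGraph.Reachable.refl _⟩
      · exact h'
end

section
/- Let t be a join node with children l, r as above, and let S ⊆ V(G[t]) with S ∩ X_t = R. Then a vertex subset C ⊆ S \ X_t contained in V(G[l]) that is a connected component of G[S ∩ V(G[l])] disjoint from X_t is also a connected component of G[S]; consequently, if S ∩ V(G[l]) is disconnected with a component disjoint from X_t, then S is not a good subset of G[t]. -/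
/-- `C` is a connected component of the induced subgraph `G[S]`. -/
def IsCompOf {V : Type*} (G : SimpleGraph V) (S C : Set V) : Prop :=
  C.Nonempty ∧ C ⊆ S ∧ (∀ a ∈ C, ∀ b ∈ C, ReachIn G S a b) ∧
    (∀ a ∈ C, ∀ b ∈ S, ReachIn G S a b → b ∈ C)

/-- at a join node `t` with children `l, r`, for `S ⊆ V(G[t])` with
`S ∩ X_t = R`: any `C ⊆ S \ X_t` with `C ⊆ V(G[l])` that is a connected component of
`G[S ∩ V(G[l])]` disjoint from `X_t` is also a connected component of `G[S]`;
consequently, if `S ∩ V(G[l])` is disconnected with a component disjoint from `X_t`,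
then `S` is not a good subset of `G[t]`. -/
theorem join_component_persists {V : Type*} (G : SimpleGraph V)
    (Vt Vl Vr Xt : Set V)
    (hVt : Vt = Vl ∪ Vr) (hInter : Vl ∩ Vr = Xt)
    (hNoEdge : ∀ a ∈ Vl \ Xt, ∀ b ∈ Vr \ Xt, ¬ G.Adj a b)
    (S R : Set V) (hSVt : S ⊆ Vt) (hR : S ∩ Xt = R) :
    (∀ C : Set V, C ⊆ S \ Xt → C ⊆ Vl → IsCompOf G (S ∩ Vl) C → C ∩ Xt = ∅ →
      IsCompOf G S C) ∧
    ((¬ (G.induce (S ∩ Vl)).Connected ∧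
        (∃ C : Set V, IsCompOf G (S ∩ Vl) C ∧ C ∩ Xt = ∅)) →
      ¬ Good G S Xt) := by
  subst hVt
  have main : ∀ C : Set V, C ⊆ S \ Xt → C ⊆ Vl → IsCompOf G (S ∩ Vl) C → C ∩ Xt = ∅ →
      IsCompOf G S C := by
    intro C hCS hCVl hComp _
    obtain ⟨hne, hsub, hreach, hclose⟩ := hComp
    have hCsubS : C ⊆ S := fun x hx => (hCS hx).1
    -- key: walks in G[S] starting in C stay in C
    have key : ∀ (x y : ↥S), (G.induce S).Walk x y → (x : V) ∈ C → (y : V) ∈ C := by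
      intro x y w
      induction w with
      | nil => exact id
      | @cons u z y h p ih =>
        intro hu
        apply ih
        -- h : (G.induce S).Adj u z, i.e. G.Adj ↑u ↑z
        have hadj : G.Adj (u : V) (z : V) := h
        have huVl : (u : V) ∈ Vl \ Xt := ⟨hCVl hu, (hCS hu).2⟩
        have hzVl : (z : V) ∈ Vl := by
          rcases hSVt z.2 with hl | hr
          · exact hl
          · by_cases hx : (z : V) ∈ Xt
            · rw [← hInter] at hx; exact hx.1
            · exact absurd hadj (hNoEdge _ huVl _ ⟨hr, hx⟩)
        have hzS : (z : V) ∈ S ∩ Vl := ⟨z.2, hzVl⟩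
        refine hclose _ hu _ hzS ⟨hsub hu, hzS, ?_⟩
        exact SimpleGraph.Adj.reachable hadj
    refine ⟨hne, hCsubS, ?_, ?_⟩
    · intro a ha b hb
      obtain ⟨ha', hb', hr⟩ := hreach a ha b hb
      exact ⟨(ha' : a ∈ S ∩ Vl).1, hb'.1, hr.map (G.induceHomOfLE Set.inter_subset_left).toHom⟩
    · rintro a ha b hb ⟨haS, hbS, ⟨w⟩⟩
      exact key ⟨a, haS⟩ ⟨b, hbS⟩ w ha
  refine ⟨main, ?_⟩
  rintro ⟨hdisc, C, hComp, hCXt⟩ hgood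
  have hCS : C ⊆ S \ Xt := by
    intro x hx
    refine ⟨(hComp.2.1 hx).1, fun hxX => ?_⟩
    exact absurd (Set.mem_inter hx hxX) (by rw [hCXt]; exact id)
  have hCVl : C ⊆ Vl := fun x hx => (hComp.2.1 hx).2
  have hCompS := main C hCS hCVl hComp hCXt
  obtain ⟨x, hx⟩ := hCompS.1
  rcases hgood with hconn | hall
  · -- then S ⊆ C ⊆ Vl, so S ∩ Vl = S, contradicting disconnectedness
    have hSC : S ⊆ C := by
      intro b hb
      refine hCompS.2.2.2 x hx b hb ⟨hCompS.2.1 hx, hb, hconn.preconnected _ _⟩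
    have hSVl : S ∩ Vl = S := by
      apply Set.inter_eq_left.mpr
      exact fun b hb => hCVl (hSC hb)
    rw [hSVl] at hdisc
    exact hdisc hconn
  · obtain ⟨b, hbX, hr⟩ := hall x (hCompS.2.1 hx)
    have hbC : b ∈ C := hCompS.2.2.2 x hx b hr.2.1 hr
    exact absurd (Set.mem_inter hbC hbX) (by rw [hCXt]; exact id)
end

section
/- Let t be a forget node forgetting v (X_t = X_{t'} \ {v}) with child t', and let S ⊆ V(G[t']) be a good subset of G[t'] with v ∈ S, S ∩ X_{t'} ≠ {v}, and the connected component of v in G[S] disjoint from X_{t'} \ {v}. Then S is not a good subset of G[t]. -/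
/-- at a forget node `t` forgetting `v` (`X_t = X_{t'} \ {v}`) with child
`t'`, if `S ⊆ V(G[t'])` is a good subset of `G[t']` with `v ∈ S`, `S ∩ X_{t'} ≠ {v}`,
and the connected component of `v` in `G[S]` disjoint from `X_{t'} \ {v}`, then `S` is
not a good subset of `G[t]`. -/
theorem forget_not_good {V : Type*} (G : SimpleGraph V)
    (Vt Xt Xt' : Set V) (v : V)
    (hXt : Xt = Xt' \ {v}) (hvX : v ∈ Xt') (hXV : Xt' ⊆ Vt)
    (S : Set V) (hSVt : S ⊆ Vt)
    (hgood : Good G S Xt') (hvS : v ∈ S)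
    (hne : S ∩ Xt' ≠ {v})
    (hcomp : ∀ u : V, ReachIn G S v u → u ∉ Xt' \ {v}) :
    ¬ Good G S Xt := by
  -- There is some `w ∈ S ∩ Xt'` with `w ≠ v`.
  obtain ⟨w, hwSX, hwv⟩ : ∃ w, w ∈ S ∩ Xt' ∧ w ≠ v := by
    by_contra h
    push_neg at h
    apply hne
    apply Set.eq_singleton_iff_unique_mem.2
    exact ⟨⟨hvS, hvX⟩, fun x hx => by
      by_contra hxv; exact hxv (h x hx)⟩
  rintro (hconn | hall)
  · exact hcomp w ⟨hvS, hwSX.1, hconn.preconnected _ _⟩ ⟨hwSX.2, hwv⟩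
  · obtain ⟨b, hbX, hreach⟩ := hall v hvS
    rw [hXt] at hbX
    exact hcomp b hreach hbX
end
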